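/- arXiv:2407.11869 — 7 statements merged into one kernel-verified Lean document; each statement's English description precedes it below -/
import Mathlib

section
/- In a non-personalized pricing market with natural priorities, if x is a compatible allocation, then x is stable if and only if for each buyer i, either sum_j x_{i,j} p_j = B_i (budget depleted) or buyer i receives all items available to it in full. -/
open Finset

/-- A fraction of item `j` is available to buyer `i` in a non-personalized
market: some of `j` is unallocated or allocated to `i` itself. -/
def AvailNP {n m : ℕ} (x : Fin n → Fin m → ℝ) (i : Fin n) (j : Fin m) : Prop :=
  (∑ i', x i' j) - x i j < 1

/-- Compatibility: budget-feasible, only positively-valued items bought, and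
every item `i` holds has bang-per-buck weakly larger than any available item. -/
def CompatibleNP {n m : ℕ} (v : Fin n → Fin m → ℝ) (p : Fin m → ℝ)
    (B : Fin n → ℝ) (x : Fin n → Fin m → ℝ) : Prop :=
  (∀ i j, 0 ≤ x i j ∧ x i j ≤ 1) ∧
  (∀ j, ∑ i, x i j ≤ 1) ∧
  (∀ i, ∑ j, p j * x i j ≤ B i) ∧
  (∀ i j, 0 < x i j → 0 < v i j) ∧
  (∀ i j j', 0 < x i j → AvailNP x i j' → v i j' / p j' ≤ v i j / p j)

/-- Stability in a non-personalized pricing market with natural priorities. -/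
def StableNP {n m : ℕ} (v : Fin n → Fin m → ℝ) (p : Fin m → ℝ) (B : Fin n → ℝ)
    (x : Fin n → Fin m → ℝ) : Prop :=
  (∀ i j, 0 ≤ x i j ∧ x i j ≤ 1) ∧
  (∀ j, ∑ i, x i j ≤ 1) ∧
  (∀ i, ∑ j, p j * x i j ≤ B i) ∧
  (∀ i j, 0 < x i j → 0 < v i j) ∧
  ¬ ∃ i j, 0 < v i j ∧ (∑ i', x i' j) < 1 ∧
      ((∑ j', p j' * x i j') < B i ∨
        ∃ j', 0 < x i j' ∧ v i j' / p j' < v i j / p j)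

theorem stmt_3 {n m : ℕ} (v : Fin n → Fin m → ℝ) (p : Fin m → ℝ)
    (B : Fin n → ℝ) (x : Fin n → Fin m → ℝ)
    (hv : ∀ i j, 0 ≤ v i j) (hp : ∀ j, 0 < p j)
    (hc : CompatibleNP v p B x) :
    StableNP v p B x ↔
      ∀ i, (∑ j, p j * x i j) = B i ∨
        ∀ j, 0 < v i j → (∑ i', x i' j) = 1 := by
  obtain ⟨h01, hcap, hbud, hpos, hbpb⟩ := hc
  constructor
  · rintro ⟨-, -, -, -, hstab⟩ i
    by_cases hB : (∑ j, p j * x i j) = B i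
    · exact Or.inl hB
    · refine Or.inr fun j hvj => ?_
      have hlt : (∑ j, p j * x i j) < B i := lt_of_le_of_ne (hbud i) hB
      by_contra hne
      exact hstab ⟨i, j, hvj, lt_of_le_of_ne (hcap j) hne, Or.inl hlt⟩
  · intro h
    refine ⟨h01, hcap, hbud, hpos, ?_⟩
    rintro ⟨i, j, hvj, hsum, hblock⟩
    rcases h i with hB | hall
    · rcases hblock with hlt | ⟨j', hxj', hpref⟩
      · exact absurd hB (ne_of_lt hlt)
      · have havail : AvailNP x i j := by
          have := (h01 i j).1
          unfold AvailNP; linarith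
        exact absurd (hbpb i j' j hxj' havail) (not_le.mpr hpref)
    · exact absurd (hall j hvj) (ne_of_lt hsum)
end

section
/- Any competitive equilibrium allocation of a linear Fisher market is a stable allocation in the corresponding non-personalized pricing market with the competitive equilibrium prices and natural priorities. -/
open Finset

/-- Competitive equilibrium of a linear Fisher market: each buyer's bundle
maximizes its linear utility among all nonnegative budget-feasible bundles,
and every item is fully allocated. -/
def CompEq {n m : ℕ} (v : Fin n → Fin m → ℝ) (B : Fin n → ℝ)
    (p : Fin m → ℝ) (x : Fin n → Fin m → ℝ) : Prop :=
  (∀ i j, 0 ≤ x i j) ∧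
  (∀ i, ∑ j, p j * x i j ≤ B i) ∧
  (∀ i, ∀ y : Fin m → ℝ, (∀ j, 0 ≤ y j) → (∑ j, p j * y j) ≤ B i →
    (∑ j, v i j * y j) ≤ ∑ j, v i j * x i j) ∧
  (∀ j, ∑ i, x i j = 1)

theorem stmt_4 {n m : ℕ} (v : Fin n → Fin m → ℝ) (B : Fin n → ℝ)
    (p : Fin m → ℝ) (x : Fin n → Fin m → ℝ)
    (hv : ∀ i j, 0 ≤ v i j) (hvi : ∀ i, ∃ j, 0 < v i j)
    (hp : ∀ j, 0 < p j) (hB : ∀ i, 0 < B i)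
    (hce : CompEq v B p x) :
    StableNP v p B x := by
  obtain ⟨hx0, hbud, hmax, hclear⟩ := hce
  refine ⟨?_, ?_, hbud, ?_, ?_⟩
  · intro i j
    refine ⟨hx0 i j, ?_⟩
    have h := hclear j
    calc x i j ≤ ∑ i', x i' j := by
          exact Finset.single_le_sum (fun i' _ => hx0 i' j) (Finset.mem_univ i)
      _ = 1 := h
  · intro j; exact (hclear j).le
  · intro i j hxij
    by_contra hvij
    have hvij0 : v i j = 0 := le_antisymm (not_lt.mp hvij) (hv i j)
    obtain ⟨j', hvj'⟩ := hvi i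
    have hne : j' ≠ j := by rintro rfl; exact hvij hvj'
    set c : ℝ := p j * x i j / p j' with hc
    have hcpos : 0 < c := div_pos (mul_pos (hp j) hxij) (hp j')
    set y : Fin m → ℝ := fun k =>
      x i k + (if k = j' then c else 0) - (if k = j then x i j else 0) with hy
    have key : ∀ g : Fin m → ℝ,
        ∑ k, g k * y k = (∑ k, g k * x i k) + g j' * c - g j * x i j := by
      intro g
      simp only [hy, mul_sub, mul_add, mul_ite, mul_zero]
      rw [Finset.sum_sub_distrib, Finset.sum_add_distrib,
        Finset.sum_ite_eq' Finset.univ j', Finset.sum_ite_eq' Finset.univ j]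
      simp
    have hynn : ∀ k, 0 ≤ y k := by
      intro k
      by_cases hkj : k = j
      · subst hkj
        simp [hy, if_neg (Ne.symm hne)]
      · simp only [hy, if_neg hkj, sub_zero]
        have := hx0 i k
        split_ifs <;> linarith [hcpos.le]
    have hbudy : ∑ k, p k * y k ≤ B i := by
      rw [key p]
      have : p j' * c = p j * x i j := by
        rw [hc, mul_div_assoc', mul_div_cancel_left₀ _ (hp j').ne']
      rw [this]
      simpa using hbud i
    have := hmax i y hynn hbudy
    rw [key (v i), hvij0] at this
    nlinarith [mul_pos hvj' hcpos]
  · rintro ⟨i, j, _, hlt, _⟩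
    rw [hclear j] at hlt
    exact lt_irrefl 1 hlt
end

section
/- In a non-personalized pricing market, let p' be a price vector obtained from p by increasing the price of a single item j_0 by epsilon > 0 (prices of other items unchanged). Then R(p') <= R(p) + epsilon, where R(p) denotes the maximum total revenue over all budget-feasible allocations at prices p. -/
open Finset

/-- Budget-feasible allocations at non-personalized prices `p`. -/
def BudgetFeasible {n m : ℕ} (v : Fin n → Fin m → ℝ) (p : Fin m → ℝ)
    (B : Fin n → ℝ) (x : Fin n → Fin m → ℝ) : Prop :=
  (∀ i j, 0 ≤ x i j ∧ x i j ≤ 1) ∧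
  (∀ j, ∑ i, x i j ≤ 1) ∧
  (∀ i j, v i j = 0 → x i j = 0) ∧
  (∀ i, ∑ j, p j * x i j ≤ B i)

/-- `R p` : the maximum (supremum of) total revenue over all budget-feasible
allocations at prices `p`. -/
noncomputable def maxRevenue {n m : ℕ} (v : Fin n → Fin m → ℝ)
    (B : Fin n → ℝ) (p : Fin m → ℝ) : ℝ :=
  sSup {r : ℝ | ∃ x, BudgetFeasible v p B x ∧ r = ∑ i, ∑ j, p j * x i j}

theorem stmt_5 {n m : ℕ} (v : Fin n → Fin m → ℝ) (B : Fin n → ℝ)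
    (p p' : Fin m → ℝ) (j₀ : Fin m) (ε : ℝ) (hε : 0 < ε)
    (hv : ∀ i j, 0 ≤ v i j) (hp : ∀ j, 0 ≤ p j) (hB : ∀ i, 0 ≤ B i)
    (hj₀ : p' j₀ = p j₀ + ε) (hother : ∀ j, j ≠ j₀ → p' j = p j) :
    maxRevenue v B p' ≤ maxRevenue v B p + ε := by
  set S : Set ℝ := {r : ℝ | ∃ x, BudgetFeasible v p B x ∧ r = ∑ i, ∑ j, p j * x i j}
  have hple : ∀ j, p j ≤ p' j := by
    intro j
    by_cases h : j = j₀
    · subst h; rw [hj₀]; linarith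
    · rw [hother j h]
  have h0S : (0 : ℝ) ∈ S := by
    refine ⟨fun _ _ => 0, ⟨fun i j => by norm_num, fun j => by simp,
      fun i j _ => rfl, fun i => by simpa using hB i⟩, by simp⟩
  have hbdd : BddAbove S := by
    refine ⟨∑ i, B i, fun r hr => ?_⟩
    obtain ⟨x, ⟨_, _, _, hbud⟩, rfl⟩ := hr
    exact Finset.sum_le_sum fun i _ => hbud i
  have hS0 : 0 ≤ sSup S := le_csSup hbdd h0S
  unfold maxRevenue
  refine Real.sSup_le ?_ (by linarith)
  rintro r ⟨x, ⟨hx01, hxsum, hxv, hxbud⟩, rfl⟩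
  -- x is feasible at p
  have hfeas : BudgetFeasible v p B x := by
    refine ⟨hx01, hxsum, hxv, fun i => le_trans ?_ (hxbud i)⟩
    exact Finset.sum_le_sum fun j _ => mul_le_mul_of_nonneg_right (hple j) (hx01 i j).1
  have hmem : (∑ i, ∑ j, p j * x i j) ∈ S := ⟨x, hfeas, rfl⟩
  have hrev : ∑ i, ∑ j, p' j * x i j
      = (∑ i, ∑ j, p j * x i j) + ε * ∑ i, x i j₀ := by
    rw [Finset.mul_sum, ← Finset.sum_add_distrib]
    refine Finset.sum_congr rfl fun i _ => ?_
    have : ∀ j : Fin m, p' j * x i j = p j * x i j +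
        (if j = j₀ then ε * x i j₀ else 0) := by
      intro j
      by_cases h : j = j₀
      · subst h; rw [hj₀]; simp; ring
      · rw [hother j h]; simp [h]
    rw [Finset.sum_congr rfl fun j _ => this j, Finset.sum_add_distrib,
      Finset.sum_ite_eq' Finset.univ j₀ (fun _ => ε * x i j₀)]
    simp
  rw [hrev]
  have h1 : ε * ∑ i, x i j₀ ≤ ε * 1 :=
    mul_le_mul_of_nonneg_left (hxsum j₀) hε.le
  have h2 : (∑ i, ∑ j, p j * x i j) ≤ sSup S := le_csSup hbdd hmem
  linarith
end

section
/- In the minimum-maximal-matching reduction market (buyers = left vertices with budget 1, items = right vertices with price 1, v_{i,j} = 1 iff (i,j) is an edge), for every stable (possibly fractional) allocation x with total revenue T, there exists an integral stable allocation (maximal matching) with revenue (cardinality) at most T. Consequently, the minimum revenue over all stable allocations equals the size of a minimum maximal matching of the bipartite graph. -/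
open Finset

/-- Stability in the market constructed from a bipartite graph `E` with unit
budgets and unit prices. -/
def StableGraph {I J : Type*} [Fintype I] [Fintype J]
    (E : I → J → Prop) (x : I → J → ℝ) : Prop :=
  (∀ i j, 0 ≤ x i j ∧ x i j ≤ 1) ∧
  (∀ j, ∑ i, x i j ≤ 1) ∧
  (∀ i, ∑ j, x i j ≤ 1) ∧
  (∀ i j, 0 < x i j → E i j) ∧
  ¬ ∃ i j, E i j ∧ (∑ i', x i' j) < 1 ∧ (∑ j', x i j') < 1

/-- A maximal matching of `(I, J, E)` as a finite set of edges. -/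
def MaximalMatching {I J : Type*} [DecidableEq I] [DecidableEq J]
    (E : I → J → Prop) (M : Finset (I × J)) : Prop :=
  (∀ e ∈ M, E e.1 e.2) ∧
  (∀ e ∈ M, ∀ e' ∈ M, e ≠ e' → e.1 ≠ e'.1 ∧ e.2 ≠ e'.2) ∧
  (∀ i j, E i j → (∃ j', (i, j') ∈ M) ∨ ∃ i', (i', j) ∈ M)

/-!
Complete a stable allocation `x` to the doubly stochastic matrix
`[[1 - diag (row sums of x), x], [xᵀ, 1 - diag (column sums of x)]]` indexed by `I ⊕ J`.
By Birkhoff's theorem it is a convex combination of permutation matrices, and the revenue of `x`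
is the weighted average of the number of buyer-to-item arcs of these permutations, so some
permutation `σ` of positive weight has at most that many. Positive weight puts `σ` inside the
support of the completion: its buyer-to-item arcs are edges, and a buyer whose budget is spent
(or an item that is sold out) has a zero diagonal entry, hence is matched across the bipartition.
Stability gives every edge such an endpoint, so the arcs of `σ` form a maximal matching.
-/

open Matrix Equiv

theorem le_sum_smul_permMatrix_apply {n R : Type*} [Fintype n] [DecidableEq n] [Semiring R]
    [PartialOrder R] [IsOrderedRing R] {w : Perm n → R} (hw₀ : ∀ σ, 0 ≤ w σ)
    (σ : Perm n) (u : n) : w σ ≤ (∑ τ, w τ • τ.permMatrix R) u (σ u) := by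
  have hP : ∀ τ : Perm n, τ.permMatrix R u (σ u) = if τ u = σ u then 1 else 0 := fun τ => by
    simp [Perm.permMatrix, PEquiv.toMatrix_apply, eq_comm]
  rw [Matrix.sum_apply]
  calc w σ = (w σ • σ.permMatrix R) u (σ u) := by simp
    _ ≤ ∑ τ, (w τ • τ.permMatrix R) u (σ u) :=
      single_le_sum (f := fun τ => (w τ • τ.permMatrix R) u (σ u))
        (fun τ _ => by rw [Matrix.smul_apply, hP]; split_ifs <;> simp [hw₀]) (mem_univ σ)

theorem exists_pos_le_sum_mul_of_sum_eq_one {ι R : Type*} [Fintype ι] [Ring R] [LinearOrder R]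
    [IsStrictOrderedRing R] {w : ι → R} (f : ι → R) (hw₀ : ∀ i, 0 ≤ w i)
    (hw₁ : ∑ i, w i = 1) : ∃ i, 0 < w i ∧ f i ≤ ∑ j, w j * f j := by
  by_contra! h
  obtain ⟨i₀, -, hi₀⟩ : ∃ i ∈ univ, (0 : R) < w i :=
    exists_lt_of_sum_lt (by simp [hw₁])
  have hlt : ∑ j, w j * ∑ k, w k * f k < ∑ j, w j * f j := by
    refine sum_lt_sum (fun j _ => ?_) ⟨i₀, mem_univ _, mul_lt_mul_of_pos_left (h i₀ hi₀) hi₀⟩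
    rcases (hw₀ j).eq_or_lt with hj | hj
    · simp [← hj]
    · exact mul_le_mul_of_nonneg_left (h j hj).le hj.le
  rw [← sum_mul, hw₁, one_mul] at hlt
  exact hlt.false

section Completion

variable {I J R : Type*} [Fintype I] [Fintype J] [DecidableEq I] [DecidableEq J]

def doublyStochasticCompletion [Ring R] (x : I → J → R) : Matrix (I ⊕ J) (I ⊕ J) R :=
  fromBlocks (diagonal fun i => 1 - ∑ j, x i j) (of x) (of x)ᵀ (diagonal fun j => 1 - ∑ i, x i j)

theorem doublyStochasticCompletion_mem_doublyStochastic [Ring R] [PartialOrder R]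
    [IsOrderedRing R] {x : I → J → R} (hx₀ : ∀ i j, 0 ≤ x i j)
    (hrow : ∀ i, ∑ j, x i j ≤ 1) (hcol : ∀ j, ∑ i, x i j ≤ 1) :
    doublyStochasticCompletion x ∈ doublyStochastic R (I ⊕ J) := by
  refine mem_doublyStochastic_iff_sum.2 ⟨?_, ?_, ?_⟩
  · rintro (i | j) (i' | j') <;>
      simp only [doublyStochasticCompletion, fromBlocks_apply₁₁, fromBlocks_apply₁₂,
        fromBlocks_apply₂₁, fromBlocks_apply₂₂, diagonal_apply, transpose_apply]
    · split_ifs <;> simp [hrow]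
    · exact hx₀ i j'
    · exact hx₀ i' j
    · split_ifs <;> simp [hcol]
  · rintro (i | j) <;> simp [doublyStochasticCompletion, Fintype.sum_sum_type, diagonal_apply]
  · rintro (i | j) <;> simp [doublyStochasticCompletion, Fintype.sum_sum_type, diagonal_apply]

@[simp]
theorem doublyStochasticCompletion_inl_inr [Ring R] (x : I → J → R) (i : I) (j : J) :
    doublyStochasticCompletion x (.inl i) (.inr j) = x i j :=
  rfl

theorem doublyStochasticCompletion_inl_inl_eq_zero [Ring R] {x : I → J → R} {i : I}
    (hi : ∑ j, x i j = 1) (i' : I) : doublyStochasticCompletion x (.inl i) (.inl i') = 0 := by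
  by_cases h : i = i' <;> simp [doublyStochasticCompletion, h, ← hi]

theorem doublyStochasticCompletion_inr_inr_eq_zero [Ring R] {x : I → J → R} {j : J}
    (hj : ∑ i, x i j = 1) (j' : J) : doublyStochasticCompletion x (.inr j') (.inr j) = 0 := by
  by_cases h : j' = j <;> simp [doublyStochasticCompletion, h, ← hj]

end Completion

section PermMatching

variable {I J : Type*} [Fintype I] [Fintype J] [DecidableEq I] [DecidableEq J]

def matchingOfPerm (σ : Perm (I ⊕ J)) : Finset (I × J) :=
  {p | σ (.inl p.1) = .inr p.2}

theorem mem_matchingOfPerm {σ : Perm (I ⊕ J)} {i : I} {j : J} :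
    (i, j) ∈ matchingOfPerm σ ↔ σ (.inl i) = .inr j := by
  simp [matchingOfPerm]

theorem matchingOfPerm_pairwise (σ : Perm (I ⊕ J)) :
    ∀ e ∈ matchingOfPerm σ, ∀ e' ∈ matchingOfPerm σ, e ≠ e' → e.1 ≠ e'.1 ∧ e.2 ≠ e'.2 := by
  rintro ⟨i, j⟩ he ⟨i', j'⟩ he' hne
  rw [mem_matchingOfPerm] at he he'
  refine ⟨fun hi => hne ?_, fun hj => hne ?_⟩
  · subst hi
    simp_all
  · subst hj
    simpa using σ.injective (he.trans he'.symm)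

theorem card_matchingOfPerm (R : Type*) [Semiring R] (σ : Perm (I ⊕ J)) :
    (#(matchingOfPerm σ) : R) = ∑ i, ∑ j, σ.permMatrix R (.inl i) (.inr j) := by
  rw [← Fintype.sum_prod_type' (f := fun i j => σ.permMatrix R (.inl i) (.inr j))]
  simp [matchingOfPerm, Perm.permMatrix, PEquiv.toMatrix_apply, sum_boole, eq_comm]

end PermMatching

section StableAllocation

variable {I J : Type*} [Fintype I] [Fintype J] {E : I → J → Prop} {x : I → J → ℝ}

theorem StableGraph.sum_row_eq_one_or_sum_col_eq_one (hx : StableGraph E x) {i : I} {j : J}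
    (hE : E i j) : ∑ j', x i j' = 1 ∨ ∑ i', x i' j = 1 := by
  by_contra! h
  exact hx.2.2.2.2 ⟨i, j, hE, (hx.2.1 j).lt_of_ne h.2, (hx.2.2.1 i).lt_of_ne h.1⟩

variable [DecidableEq I] [DecidableEq J]

theorem StableGraph.completion_mem_doublyStochastic (hx : StableGraph E x) :
    doublyStochasticCompletion x ∈ doublyStochastic ℝ (I ⊕ J) :=
  doublyStochasticCompletion_mem_doublyStochastic (fun i j => (hx.1 i j).1) hx.2.2.1 hx.2.1

theorem StableGraph.maximalMatching_matchingOfPerm (hx : StableGraph E x) {σ : Perm (I ⊕ J)}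
    (hσ : ∀ u, 0 < doublyStochasticCompletion x u (σ u)) :
    MaximalMatching E (matchingOfPerm σ) := by
  refine ⟨fun ⟨i, j⟩ he => hx.2.2.2.1 i j ?_, matchingOfPerm_pairwise σ, fun i j hE => ?_⟩
  · simpa [mem_matchingOfPerm.1 he] using hσ (.inl i)
  rcases hx.sum_row_eq_one_or_sum_col_eq_one hE with hi | hj
  · left
    rcases hu : σ (.inl i) with i' | j'
    · have := hσ (.inl i)
      rw [hu, doublyStochasticCompletion_inl_inl_eq_zero hi] at this
      exact (lt_irrefl 0 this).elim
    · exact ⟨j', mem_matchingOfPerm.2 hu⟩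
  · right
    rcases hu : σ.symm (.inr j) with i' | j'
    · exact ⟨i', mem_matchingOfPerm.2 (by rw [← hu, Equiv.apply_symm_apply])⟩
    · have := hσ (.inr j')
      rw [← hu, Equiv.apply_symm_apply, hu, doublyStochasticCompletion_inr_inr_eq_zero hj] at this
      exact (lt_irrefl 0 this).elim

theorem StableGraph.exists_maximalMatching_card_le (hx : StableGraph E x) :
    ∃ M, MaximalMatching E M ∧ (#M : ℝ) ≤ ∑ i, ∑ j, x i j := by
  obtain ⟨w, hw₀, hw₁, hw⟩ :=
    exists_eq_sum_perm_of_mem_doublyStochastic hx.completion_mem_doublyStochastic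
  have hrev : ∑ i, ∑ j, x i j = ∑ σ, w σ * #(matchingOfPerm σ) := by
    calc ∑ i, ∑ j, x i j
        = ∑ i, ∑ j, (∑ σ, w σ • σ.permMatrix ℝ) (.inl i) (.inr j) := by
          simp [hw]
      _ = ∑ σ, w σ * #(matchingOfPerm σ) := by
          simp only [card_matchingOfPerm, Matrix.sum_apply, Matrix.smul_apply, smul_eq_mul,
            mul_sum]
          exact (sum_congr rfl fun _ _ => sum_comm).trans sum_comm
  obtain ⟨σ, hwσ, hσ⟩ := exists_pos_le_sum_mul_of_sum_eq_one (fun σ => (#(matchingOfPerm σ) : ℝ))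
    hw₀ hw₁
  refine ⟨matchingOfPerm σ, hx.maximalMatching_matchingOfPerm fun u => ?_, hrev ▸ hσ⟩
  exact hwσ.trans_le (hw ▸ le_sum_smul_permMatrix_apply hw₀ σ u)

end StableAllocation

section MatchingIndicator

variable {I J : Type*} [DecidableEq I] [DecidableEq J] {E : I → J → Prop} {M : Finset (I × J)}

def matchingIndicator (M : Finset (I × J)) (i : I) (j : J) : ℝ :=
  if (i, j) ∈ M then 1 else 0

theorem matchingIndicator_eq_zero_or_one (M : Finset (I × J)) (i : I) (j : J) :
    matchingIndicator M i j = 0 ∨ matchingIndicator M i j = 1 := by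
  unfold matchingIndicator
  split_ifs <;> simp

theorem sum_matchingIndicator [Fintype I] [Fintype J] (M : Finset (I × J)) :
    ∑ i, ∑ j, matchingIndicator M i j = #M := by
  rw [← Fintype.sum_prod_type' (f := matchingIndicator M)]
  simp [matchingIndicator]

theorem sum_row_matchingIndicator [Fintype J] (M : Finset (I × J)) (i : I) :
    ∑ j, matchingIndicator M i j = #{j | (i, j) ∈ M} := by
  simp [matchingIndicator, sum_boole]

theorem sum_col_matchingIndicator [Fintype I] (M : Finset (I × J)) (j : J) :
    ∑ i, matchingIndicator M i j = #{i | (i, j) ∈ M} := by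
  simp [matchingIndicator, sum_boole]

theorem MaximalMatching.stableGraph [Fintype I] [Fintype J] (hM : MaximalMatching E M) :
    StableGraph E (matchingIndicator M) := by
  obtain ⟨hedge, hdisj, hmax⟩ := hM
  have hrow (i : I) : #{j | (i, j) ∈ M} ≤ 1 := card_le_one.2 fun j hj j' hj' => by
    by_contra hne
    simp only [mem_filter, mem_univ, true_and] at hj hj'
    exact (hdisj _ hj _ hj' (by simp [hne])).1 rfl
  have hcol (j : J) : #{i | (i, j) ∈ M} ≤ 1 := card_le_one.2 fun i hi i' hi' => by
    by_contra hne
    simp only [mem_filter, mem_univ, true_and] at hi hi'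
    exact (hdisj _ hi _ hi' (by simp [hne])).2 rfl
  refine ⟨fun i j => ?_, fun j => ?_, fun i => ?_, fun i j hx => ?_, ?_⟩
  · rcases matchingIndicator_eq_zero_or_one M i j with h | h <;> simp [h]
  · exact_mod_cast (sum_col_matchingIndicator M j).trans_le (by exact_mod_cast hcol j)
  · exact_mod_cast (sum_row_matchingIndicator M i).trans_le (by exact_mod_cast hrow i)
  · unfold matchingIndicator at hx
    split_ifs at hx with h
    · exact hedge _ h
    · exact absurd hx (lt_irrefl 0)
  · rintro ⟨i, j, hE, hj, hi⟩
    rw [sum_col_matchingIndicator, Nat.cast_lt_one, card_eq_zero] at hj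
    rw [sum_row_matchingIndicator, Nat.cast_lt_one, card_eq_zero] at hi
    rcases hmax i j hE with ⟨j', hj'⟩ | ⟨i', hi'⟩
    · exact (eq_empty_iff_forall_notMem.1 hi) j' (by simpa using hj')
    · exact (eq_empty_iff_forall_notMem.1 hj) i' (by simpa using hi')

end MatchingIndicator

theorem stmt_7 {I J : Type*} [Fintype I] [Fintype J]
    [DecidableEq I] [DecidableEq J]
    (E : I → J → Prop) (x : I → J → ℝ) (hx : StableGraph E x) :
    (∃ y : I → J → ℝ, StableGraph E y ∧ (∀ i j, y i j = 0 ∨ y i j = 1) ∧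
      (∑ i, ∑ j, y i j) ≤ ∑ i, ∑ j, x i j) ∧
    sInf {r : ℝ | ∃ z, StableGraph E z ∧ r = ∑ i, ∑ j, z i j} =
      sInf {r : ℝ | ∃ M : Finset (I × J), MaximalMatching E M ∧ r = M.card} := by
  obtain ⟨M, hM, hMx⟩ := hx.exists_maximalMatching_card_le
  refine ⟨⟨matchingIndicator M, hM.stableGraph, matchingIndicator_eq_zero_or_one M,
    (sum_matchingIndicator M).trans_le hMx⟩, ?_⟩
  apply csInf_eq_csInf_of_forall_exists_le
  · rintro _ ⟨z, hz, rfl⟩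
    obtain ⟨M, hM, hMz⟩ := hz.exists_maximalMatching_card_le
    exact ⟨_, ⟨M, hM, rfl⟩, hMz⟩
  · rintro _ ⟨M, hM, rfl⟩
    exact ⟨_, ⟨_, hM.stableGraph, (sum_matchingIndicator M).symm⟩, le_rfl⟩
end

section
/- In a non-personalized pricing market, if (S,T) is a minimum cut of the associated flow network with no buyer-item edges from S cap I to T cap J, then in every revenue-optimal budget-feasible allocation: every buyer in T cap I spends its entire budget, every item in S cap J is fully allocated, items in S cap J are allocated entirely to buyers in S cap I, and buyers in T cap I spend their budgets entirely on items in T cap J. -/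
open Finset

open scoped Classical in
/-- Capacity of the s-t cut `({s} ∪ SI ∪ SJ, rest)` in the flow network of a
non-personalized pricing market. -/
noncomputable def cutCap {n m : ℕ} (v : Fin n → Fin m → ℝ)
    (B : Fin n → ℝ) (p : Fin m → ℝ) (SI : Finset (Fin n))
    (SJ : Finset (Fin m)) : ℝ :=
  (∑ i ∈ SIᶜ, B i) +
    (∑ i ∈ SI, ∑ j ∈ SJᶜ, if 0 < v i j then p j else 0) +
    ∑ j ∈ SJ, p j

/-! ### Auxiliary machinery: residual reachability and augmentation -/

lemma BudgetOpt.div_mono' {a b c : ℝ} (h : a ≤ b) (hc : 0 < c) : a / c ≤ b / c := by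
  have := mul_le_mul_of_nonneg_right h (inv_nonneg.mpr hc.le)
  simpa [div_eq_mul_inv] using this

lemma BudgetOpt.sum_col_single {m : ℕ} (p : Fin m → ℝ) (hp : ∀ b, 0 < p b) (j : Fin m)
    (c : ℝ) (P : Prop) [Decidable P] :
    ∑ b, p b * (if P ∧ b = j then c / p j else 0) = if P then c else 0 := by
  by_cases hP : P
  · simp only [hP, true_and, mul_ite, mul_zero, Finset.sum_ite_eq', Finset.mem_univ, if_true]
    rw [mul_comm]
    exact div_mul_cancel₀ c (hp j).ne'
  · simp [hP]

lemma BudgetOpt.sum_row_single {n m : ℕ} (i0 : Fin n) (j b : Fin m) (c : ℝ) :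
    ∑ a : Fin n, (if a = i0 ∧ b = j then c else 0) = if b = j then c else 0 := by
  by_cases hb : b = j <;> simp [hb]

lemma BudgetOpt.revswap {n m : ℕ} (p : Fin m → ℝ) (z : Fin n → Fin m → ℝ) :
    (∑ i, ∑ b, p b * z i b) = ∑ b, p b * ∑ a, z a b := by
  rw [Finset.sum_comm]
  exact Finset.sum_congr rfl (fun b _ => (Finset.mul_sum _ _ _).symm)

/-- Residual reachability from the source in the flow network, relative to `x`. -/
inductive Reach {n m : ℕ} (v : Fin n → Fin m → ℝ) (B : Fin n → ℝ)
    (p : Fin m → ℝ) (x : Fin n → Fin m → ℝ) : (Fin n ⊕ Fin m) → Prop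
  | base (i : Fin n) : (∑ j, p j * x i j) < B i → Reach v B p x (Sum.inl i)
  | toJ (i : Fin n) (j : Fin m) : Reach v B p x (Sum.inl i) → 0 < v i j →
      x i j < 1 → Reach v B p x (Sum.inr j)
  | toI (i : Fin n) (j : Fin m) : Reach v B p x (Sum.inr j) → 0 < x i j →
      Reach v B p x (Sum.inl i)

/-- The statement proved by induction along residual reachability:
flow can be rerouted to leave slack at a reachable node. -/
def Good {n m : ℕ} (v : Fin n → Fin m → ℝ) (B : Fin n → ℝ)
    (p : Fin m → ℝ) (x : Fin n → Fin m → ℝ) : (Fin n ⊕ Fin m) → Prop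
  | Sum.inl i => ∀ ε > (0:ℝ), ∃ δ, ∃ y : Fin n → Fin m → ℝ, 0 < δ ∧ δ ≤ ε ∧
      (∀ a b, 0 ≤ y a b ∧ y a b ≤ 1) ∧ (∀ a b, v a b = 0 → y a b = 0) ∧
      (∀ k, ∑ b, p b * y k b ≤ B k) ∧ (∀ b, ∑ a, y a b = ∑ a, x a b) ∧
      (∀ a b, |y a b - x a b| ≤ ε / p b) ∧
      (∑ b, p b * y i b) + δ ≤ B i
  | Sum.inr j => ∀ ε > (0:ℝ), ∃ δ, ∃ y : Fin n → Fin m → ℝ, ∃ i' : Fin n,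
      0 < δ ∧ δ ≤ ε ∧
      (∀ a b, 0 ≤ y a b ∧ y a b ≤ 1) ∧ (∀ a b, v a b = 0 → y a b = 0) ∧
      (∀ k, ∑ b, p b * y k b ≤ B k) ∧ (∀ b, ∑ a, y a b = ∑ a, x a b) ∧
      (∀ a b, |y a b - x a b| ≤ ε / p b) ∧
      0 < v i' j ∧ y i' j + δ / p j ≤ 1 ∧ (∑ b, p b * y i' b) + δ ≤ B i'

lemma BudgetOpt.push {n m : ℕ} (v : Fin n → Fin m → ℝ) (B : Fin n → ℝ)
    (p : Fin m → ℝ) (x : Fin n → Fin m → ℝ)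
    (hp : ∀ j, 0 < p j)
    (hx : BudgetFeasible v p B x)
    {s : Fin n ⊕ Fin m} (h : Reach v B p x s) : Good v B p x s := by
  induction h with
  | base i hi =>
    intro ε hε
    refine ⟨min ε (B i - ∑ j, p j * x i j), x, lt_min hε (by linarith), min_le_left _ _,
      hx.1, hx.2.2.1, hx.2.2.2, fun b => rfl, ?_, ?_⟩
    · intro a b; simpa using div_nonneg hε.le (hp b).le
    · have := min_le_right ε (B i - ∑ j, p j * x i j); linarith
  | toJ i j hreach hvij hxij ih =>
    intro ε hε
    have hc0 : 0 < (1 - x i j) * p j := mul_pos (by linarith) (hp j)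
    set c := (1 - x i j) * p j with hc
    obtain ⟨δ₁, y, hδ₁, hδ₁ε, hyb, hyv, hysp, hycol, hynear, hyi⟩ :=
      ih (min ε (c/2)) (lt_min hε (by linarith))
    refine ⟨min δ₁ (c/2), y, i, lt_min hδ₁ (by linarith),
      le_trans (min_le_left _ _) (le_trans hδ₁ε (min_le_left _ _)),
      hyb, hyv, hysp, hycol, ?_, hvij, ?_, ?_⟩
    · intro a b
      exact le_trans (hynear a b) (BudgetOpt.div_mono' (min_le_left _ _) (hp b))
    · have h1 := (abs_le.1 (hynear i j)).2
      have h2 : min ε (c/2) / p j ≤ (c/2) / p j :=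
        BudgetOpt.div_mono' (min_le_right _ _) (hp j)
      have h3 : min δ₁ (c/2) / p j ≤ (c/2) / p j :=
        BudgetOpt.div_mono' (min_le_right _ _) (hp j)
      have h4 : c / p j = 1 - x i j := by
        rw [hc]; exact mul_div_cancel_right₀ _ (hp j).ne'
      have h5 : (c/2) / p j + (c/2) / p j = c / p j := by ring
      linarith
    · have := min_le_left δ₁ (c/2); linarith
  | toI i j hreach hxij ih =>
    intro ε hε
    have hc0 : 0 < x i j * p j := mul_pos hxij (hp j)
    set c := x i j * p j with hc
    obtain ⟨δ₁, y, i', hδ₁, hδ₁ε, hyb, hyv, hysp, hycol, hynear, hvi', hy1, hyi'⟩ :=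
      ih (min (ε/2) (c/2)) (lt_min (by linarith) (by linarith))
    have hε'2 : min (ε/2) (c/2) ≤ ε/2 := min_le_left _ _
    by_cases hii : i' = i
    · subst hii
      exact ⟨δ₁, y, hδ₁, by linarith, hyb, hyv, hysp, hycol,
        fun a b => le_trans (hynear a b) (BudgetOpt.div_mono' (by linarith) (hp b)), hyi'⟩
    · classical
      have hii' : i ≠ i' := fun h => hii h.symm
      set δ := min δ₁ (c/2) with hδdef
      set y' := fun a b => y a b + (if a = i' ∧ b = j then δ / p j else 0)
        - (if a = i ∧ b = j then δ / p j else 0) with hy'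
      have hδ0 : 0 < δ := lt_min hδ₁ (by linarith)
      have hδδ₁ : δ ≤ δ₁ := min_le_left _ _
      have hδc : δ ≤ c/2 := min_le_right _ _
      have hδε2 : δ ≤ ε/2 := by linarith
      have hδpj : 0 < δ / p j := div_pos hδ0 (hp j)
      have hpt1 : y' i' j = y i' j + δ / p j := by simp [hy', hii]
      have hpt2 : y' i j = y i j - δ / p j := by simp [hy', hii']
      have hpt3 : ∀ a b, ¬(a = i' ∧ b = j) → ¬(a = i ∧ b = j) → y' a b = y a b := by
        intro a b h1 h2; simp [hy', h1, h2]
      have hcase : ∀ (P : Fin n → Fin m → Prop),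
          (P i' j) → (P i j) → (∀ a b, ¬(a = i' ∧ b = j) → ¬(a = i ∧ b = j) → P a b) →
          ∀ a b, P a b := by
        intro P h1 h2 h3 a b
        by_cases ha1 : a = i' ∧ b = j
        · obtain ⟨rfl, rfl⟩ := ha1; exact h1
        · by_cases ha2 : a = i ∧ b = j
          · obtain ⟨rfl, rfl⟩ := ha2; exact h2
          · exact h3 a b ha1 ha2
      have hyij_lb : x i j - min (ε/2) (c/2) / p j ≤ y i j := by
        have := (abs_le.1 (hynear i j)).1; linarith
      have hcp : c / p j = x i j := by
        rw [hc]; exact mul_div_cancel_right₀ _ (hp j).ne'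
      have hhalf : (c/2) / p j + (c/2) / p j = x i j := by rw [← hcp]; ring
      have hminc : min (ε/2) (c/2) / p j ≤ (c/2) / p j :=
        BudgetOpt.div_mono' (min_le_right _ _) (hp j)
      have hδcp : δ / p j ≤ (c/2) / p j := BudgetOpt.div_mono' hδc (hp j)
      have hδ1p : δ / p j ≤ δ₁ / p j := BudgetOpt.div_mono' hδδ₁ (hp j)
      have hmine2 : min (ε/2) (c/2) / p j ≤ (ε/2) / p j := BudgetOpt.div_mono' hε'2 (hp j)
      have hδe2 : δ / p j ≤ (ε/2) / p j := BudgetOpt.div_mono' hδε2 (hp j)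
      have hee : (ε/2) / p j + (ε/2) / p j = ε / p j := by ring
      have hsum : ∀ k, ∑ b, p b * y' k b
          = (∑ b, p b * y k b) + (if k = i' then δ else 0) - (if k = i then δ else 0) := by
        intro k
        simp only [hy', mul_sub, mul_add]
        rw [Finset.sum_sub_distrib, Finset.sum_add_distrib,
          BudgetOpt.sum_col_single p hp j δ (k = i'), BudgetOpt.sum_col_single p hp j δ (k = i)]
      have hcol : ∀ b, ∑ a, y' a b = ∑ a, y a b := by
        intro b
        simp only [hy']
        rw [Finset.sum_sub_distrib, Finset.sum_add_distrib,
          BudgetOpt.sum_row_single i' j b (δ / p j), BudgetOpt.sum_row_single i j b (δ / p j)]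
        ring
      refine ⟨δ, y', hδ0, by linarith, ?_, ?_, ?_, ?_, ?_, ?_⟩
      · refine hcase _ ?_ ?_ ?_
        · rw [hpt1]
          exact ⟨by linarith [(hyb i' j).1], by linarith [hy1]⟩
        · rw [hpt2]
          exact ⟨by linarith, by linarith [(hyb i j).2]⟩
        · intro a b h1 h2; rw [hpt3 a b h1 h2]; exact hyb a b
      · refine hcase _ ?_ ?_ ?_
        · intro hv0; exact absurd hv0 (by linarith [hvi'])
        · intro hv0
          exact absurd (hx.2.2.1 i j hv0) (by linarith)
        · intro a b h1 h2 hv0; rw [hpt3 a b h1 h2]; exact hyv a b hv0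
      · intro k
        rw [hsum k]
        rcases eq_or_ne k i' with hk1 | hk1
        · have h' : ∑ b, p b * y k b + δ₁ ≤ B k := by rw [hk1]; exact hyi'
          rw [if_pos hk1, if_neg (by rw [hk1]; exact hii)]
          linarith
        · rcases eq_or_ne k i with hk2 | hk2
          · rw [if_neg hk1, if_pos hk2]
            linarith [hysp k, hδ0]
          · rw [if_neg hk1, if_neg hk2, add_zero, sub_zero]
            exact hysp k
      · intro b; rw [hcol b]; exact hycol b
      · refine hcase _ ?_ ?_ ?_
        · rw [hpt1]
          have h1 := abs_le.1 (hynear i' j)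
          rw [abs_le]
          constructor
          · have h0 : 0 ≤ ε / p j := div_nonneg hε.le (hp j).le
            linarith [h1.1]
          · linarith [h1.2]
        · rw [hpt2]
          have h1 := abs_le.1 (hynear i j)
          rw [abs_le]
          constructor
          · linarith [h1.1]
          · have h0 : 0 ≤ ε / p j := div_nonneg hε.le (hp j).le
            linarith [h1.2]
        · intro a b h1 h2
          rw [hpt3 a b h1 h2]
          exact le_trans (hynear a b) (BudgetOpt.div_mono' (by linarith) (hp b))
      · rw [hsum i, if_neg hii', if_pos rfl, add_zero]
        linarith [hysp i]

/-- Every item reachable in the residual graph is fully allocated,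
in any revenue-optimal allocation. -/
lemma BudgetOpt.saturated {n m : ℕ} (v : Fin n → Fin m → ℝ) (B : Fin n → ℝ)
    (p : Fin m → ℝ) (x : Fin n → Fin m → ℝ) (hp : ∀ j, 0 < p j)
    (hx : BudgetFeasible v p B x)
    (hopt : ∀ y, BudgetFeasible v p B y →
      (∑ i, ∑ j, p j * y i j) ≤ ∑ i, ∑ j, p j * x i j)
    {j : Fin m} (h : Reach v B p x (Sum.inr j)) :
    ∑ a, x a j = 1 := by
  classical
  have hub := hx.2.1
  have hgood : Good v B p x (Sum.inr j) := BudgetOpt.push v B p x hp hx h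
  by_contra hne
  have hlt : ∑ a, x a j < 1 := lt_of_le_of_ne (hub j) hne
  have hε : 0 < (1 - ∑ a, x a j) * p j := mul_pos (by linarith) (hp j)
  obtain ⟨δ, y, i', hδ0, hδε, hyb, hyv, hysp, hycol, hynear, hvi', hy1, hyi'⟩ :=
    hgood ((1 - ∑ a, x a j) * p j) hε
  set y' := fun a b => y a b + (if a = i' ∧ b = j then δ / p j else 0) with hy'
  have hpt1 : y' i' j = y i' j + δ / p j := by simp [hy']
  have hpt3 : ∀ a b, ¬(a = i' ∧ b = j) → y' a b = y a b := by
    intro a b h1; simp [hy', h1]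
  have hδpj : 0 < δ / p j := div_pos hδ0 (hp j)
  have hsum : ∀ k, ∑ b, p b * y' k b
      = (∑ b, p b * y k b) + (if k = i' then δ else 0) := by
    intro k
    simp only [hy', mul_add]
    rw [Finset.sum_add_distrib, BudgetOpt.sum_col_single p hp j δ (k = i')]
  have hcol : ∀ b, ∑ a, y' a b = (∑ a, y a b) + (if b = j then δ / p j else 0) := by
    intro b
    simp only [hy']
    rw [Finset.sum_add_distrib, BudgetOpt.sum_row_single i' j b (δ / p j)]
  have hδquot : δ / p j ≤ 1 - ∑ a, x a j := by
    have := BudgetOpt.div_mono' hδε (hp j)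
    rwa [mul_div_cancel_right₀ _ (hp j).ne'] at this
  have hfeas : BudgetFeasible v p B y' := by
    refine ⟨?_, ?_, ?_, ?_⟩
    · intro a b
      by_cases h1 : a = i' ∧ b = j
      · obtain ⟨rfl, rfl⟩ := h1
        rw [hpt1]
        exact ⟨by linarith [(hyb a b).1], hy1⟩
      · rw [hpt3 a b h1]; exact hyb a b
    · intro b
      rw [hcol b, hycol b]
      by_cases hb : b = j
      · subst hb; rw [if_pos rfl]; linarith
      · rw [if_neg hb, add_zero]; exact hub b
    · intro a b hv0
      by_cases h1 : a = i' ∧ b = j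
      · obtain ⟨rfl, rfl⟩ := h1
        exact absurd hv0 (by linarith)
      · rw [hpt3 a b h1]; exact hyv a b hv0
    · intro k
      rw [hsum k]
      by_cases hk : k = i'
      · have h' : ∑ b, p b * y k b + δ ≤ B k := by rw [hk]; exact hyi'
        rw [if_pos hk]; linarith
      · rw [if_neg hk, add_zero]; exact hysp k
  have hrev : (∑ i, ∑ b, p b * y' i b) = (∑ i, ∑ b, p b * x i b) + δ := by
    have h1 : (∑ i, ∑ b, p b * y' i b) = (∑ i, ∑ b, p b * y i b) + δ := by
      rw [Finset.sum_congr rfl (fun k _ => hsum k), Finset.sum_add_distrib]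
      congr 1
      simp [Finset.sum_ite_eq']
    have h2 : (∑ i, ∑ b, p b * y i b) = ∑ i, ∑ b, p b * x i b := by
      rw [BudgetOpt.revswap, BudgetOpt.revswap]
      exact Finset.sum_congr rfl (fun b _ => by rw [hycol b])
    rw [h1, h2]
  have := hopt y' hfeas
  rw [hrev] at this
  linarith

theorem stmt_9 {n m : ℕ} (v : Fin n → Fin m → ℝ) (B : Fin n → ℝ)
    (p : Fin m → ℝ) (hv : ∀ i j, 0 ≤ v i j)
    (hB : ∀ i, 0 < B i) (hp : ∀ j, 0 < p j)
    (SI : Finset (Fin n)) (SJ : Finset (Fin m))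
    (hmin : ∀ SI' SJ', cutCap v B p SI SJ ≤ cutCap v B p SI' SJ')
    (hnocross : ∀ i ∈ SI, ∀ j, j ∉ SJ → ¬ 0 < v i j)
    (x : Fin n → Fin m → ℝ) (hx : BudgetFeasible v p B x)
    (hopt : ∀ y, BudgetFeasible v p B y →
      (∑ i, ∑ j, p j * y i j) ≤ ∑ i, ∑ j, p j * x i j) :
    (∀ i, i ∉ SI → (∑ j, p j * x i j) = B i) ∧
    (∀ j ∈ SJ, (∑ i, x i j) = 1) ∧
    (∀ j ∈ SJ, ∀ i, i ∉ SI → x i j = 0) := by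
  classical
  obtain ⟨hb01, hub, hz, hbud⟩ := hx
  have hx' : BudgetFeasible v p B x := ⟨hb01, hub, hz, hbud⟩
  set SIs : Finset (Fin n) := univ.filter (fun i => Reach v B p x (Sum.inl i)) with hSIs
  set SJs : Finset (Fin m) := univ.filter (fun j => Reach v B p x (Sum.inr j)) with hSJs
  have hmemI : ∀ i, i ∈ SIs ↔ Reach v B p x (Sum.inl i) := by intro i; simp [hSIs]
  have hmemJ : ∀ j, j ∈ SJs ↔ Reach v B p x (Sum.inr j) := by intro j; simp [hSJs]
  have hF1 : ∀ i ∉ SIs, (∑ j, p j * x i j) = B i := by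
    intro i hi
    by_contra hne
    exact hi ((hmemI i).2 (Reach.base i (lt_of_le_of_ne (hbud i) hne)))
  have hF2 : ∀ j ∈ SJs, ∑ a, x a j = 1 := by
    intro j hj
    exact BudgetOpt.saturated v B p x hp hx' hopt ((hmemJ j).1 hj)
  have hF3 : ∀ j ∈ SJs, ∀ i, i ∉ SIs → x i j = 0 := by
    intro j hj i hi
    by_contra hne
    have hpos : 0 < x i j := lt_of_le_of_ne (hb01 i j).1 (Ne.symm hne)
    exact hi ((hmemI i).2 (Reach.toI i j ((hmemJ j).1 hj) hpos))
  have hF4 : ∀ i ∈ SIs, ∀ j ∈ SJsᶜ, p j * x i j = if 0 < v i j then p j else 0 := by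
    intro i hi j hj
    rw [Finset.mem_compl] at hj
    by_cases hvij : 0 < v i j
    · rw [if_pos hvij]
      have h1 : ¬ x i j < 1 := fun hlt =>
        hj ((hmemJ j).2 (Reach.toJ i j ((hmemI i).1 hi) hvij hlt))
      have h2 : x i j = 1 := le_antisymm (hb01 i j).2 (not_lt.1 h1)
      rw [h2, mul_one]
    · rw [if_neg hvij]
      have hv0 : v i j = 0 := le_antisymm (not_lt.1 hvij) (hv i j)
      rw [hz i j hv0, mul_zero]
  -- revenue equals the capacity of the residual cut
  have hcut : (∑ i, ∑ j, p j * x i j) = cutCap v B p SIs SJs := by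
    have e1 : ∑ i ∈ SIsᶜ, ∑ j, p j * x i j = ∑ i ∈ SIsᶜ, B i :=
      Finset.sum_congr rfl (fun i hi => hF1 i (Finset.mem_compl.1 hi))
    have e3 : ∑ i ∈ SIs, ∑ j ∈ SJsᶜ, p j * x i j
        = ∑ i ∈ SIs, ∑ j ∈ SJsᶜ, (if 0 < v i j then p j else 0) :=
      Finset.sum_congr rfl (fun i hi => Finset.sum_congr rfl (fun j hj => hF4 i hi j hj))
    have e4 : ∑ i ∈ SIs, ∑ j ∈ SJs, p j * x i j = ∑ j ∈ SJs, p j := by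
      rw [Finset.sum_comm]
      refine Finset.sum_congr rfl (fun j hj => ?_)
      rw [← Finset.mul_sum]
      have hss : ∑ i ∈ SIs, x i j = ∑ i, x i j :=
        Finset.sum_subset (Finset.subset_univ _) (fun i _ hi => hF3 j hj i hi)
      rw [hss, hF2 j hj, mul_one]
    calc ∑ i, ∑ j, p j * x i j
        = (∑ i ∈ SIsᶜ, ∑ j, p j * x i j) + ∑ i ∈ SIs, ∑ j, p j * x i j :=
          (Finset.sum_compl_add_sum SIs _).symm
      _ = (∑ i ∈ SIsᶜ, B i) + ((∑ i ∈ SIs, ∑ j ∈ SJsᶜ, p j * x i j)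
            + ∑ i ∈ SIs, ∑ j ∈ SJs, p j * x i j) := by
          rw [e1, Finset.sum_congr rfl
            (fun i (_ : i ∈ SIs) => (Finset.sum_compl_add_sum SJs (fun j => p j * x i j)).symm),
            Finset.sum_add_distrib]
      _ = cutCap v B p SIs SJs := by
          rw [e3, e4, cutCap]
          ring
  -- weak duality against the given minimum cut
  have hzero : ∀ i ∈ SI, ∀ j ∈ SJᶜ, p j * x i j = 0 := by
    intro i hi j hj
    have hv0 : v i j = 0 :=
      le_antisymm (not_lt.1 (hnocross i hi j (Finset.mem_compl.1 hj))) (hv i j)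
    rw [hz i j hv0, mul_zero]
  have hmid : ∑ i ∈ SI, ∑ j ∈ SJᶜ, (if 0 < v i j then p j else 0) = (0:ℝ) :=
    Finset.sum_eq_zero (fun i hi => Finset.sum_eq_zero
      (fun j hj => if_neg (hnocross i hi j (Finset.mem_compl.1 hj))))
  have hsplit : (∑ i, ∑ j, p j * x i j)
      = (∑ i ∈ SIᶜ, ∑ j, p j * x i j) + ∑ j ∈ SJ, p j * ∑ i ∈ SI, x i j := by
    rw [← Finset.sum_compl_add_sum SI (fun i => ∑ j, p j * x i j)]
    congr 1
    calc ∑ i ∈ SI, ∑ j, p j * x i j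
        = ∑ i ∈ SI, ((∑ j ∈ SJᶜ, p j * x i j) + ∑ j ∈ SJ, p j * x i j) :=
          Finset.sum_congr rfl
            (fun i _ => (Finset.sum_compl_add_sum SJ (fun j => p j * x i j)).symm)
      _ = ∑ i ∈ SI, ∑ j ∈ SJ, p j * x i j := by
          rw [Finset.sum_add_distrib]
          have hz0 : ∑ i ∈ SI, ∑ j ∈ SJᶜ, p j * x i j = 0 :=
            Finset.sum_eq_zero (fun i hi => Finset.sum_eq_zero (fun j hj => hzero i hi j hj))
          rw [hz0, zero_add]
      _ = ∑ j ∈ SJ, ∑ i ∈ SI, p j * x i j := Finset.sum_comm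
      _ = ∑ j ∈ SJ, p j * ∑ i ∈ SI, x i j :=
          Finset.sum_congr rfl (fun j _ => (Finset.mul_sum _ _ _).symm)
  have hA_le : ∑ i ∈ SIᶜ, ∑ j, p j * x i j ≤ ∑ i ∈ SIᶜ, B i :=
    Finset.sum_le_sum (fun i _ => hbud i)
  have hsig : ∀ j, ∑ i ∈ SI, x i j ≤ 1 := fun j =>
    le_trans (Finset.sum_le_sum_of_subset_of_nonneg (Finset.subset_univ _)
      (fun i _ _ => (hb01 i j).1)) (hub j)
  have hMterm : ∀ j ∈ SJ, p j * ∑ i ∈ SI, x i j ≤ p j := by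
    intro j _
    have := mul_le_mul_of_nonneg_left (hsig j) (hp j).le
    rwa [mul_one] at this
  have hM_le : ∑ j ∈ SJ, p j * ∑ i ∈ SI, x i j ≤ ∑ j ∈ SJ, p j :=
    Finset.sum_le_sum hMterm
  have hcutSI : cutCap v B p SI SJ = (∑ i ∈ SIᶜ, B i) + ∑ j ∈ SJ, p j := by
    rw [cutCap, hmid, add_zero]
  have hchain : cutCap v B p SI SJ ≤ ∑ i, ∑ j, p j * x i j := by
    rw [hcut]; exact hmin SIs SJs
  have key : (∑ i ∈ SIᶜ, B i) + ∑ j ∈ SJ, p j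
      ≤ (∑ i ∈ SIᶜ, ∑ j, p j * x i j) + ∑ j ∈ SJ, p j * ∑ i ∈ SI, x i j := by
    rw [← hcutSI, ← hsplit]; exact hchain
  have hA : ∑ i ∈ SIᶜ, ∑ j, p j * x i j = ∑ i ∈ SIᶜ, B i :=
    le_antisymm hA_le (by linarith)
  have hM : ∑ j ∈ SJ, p j * ∑ i ∈ SI, x i j = ∑ j ∈ SJ, p j :=
    le_antisymm hM_le (by linarith)
  -- conclusion 2 (and the σ = 1 fact)
  have hσ : ∀ j ∈ SJ, ∑ i ∈ SI, x i j = 1 := by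
    intro j hj
    by_contra hne
    have hlt : p j * ∑ i ∈ SI, x i j < p j := by
      refine lt_of_le_of_ne (hMterm j hj) (fun h => hne ?_)
      have := mul_left_cancel₀ (hp j).ne' (h.trans (mul_one (p j)).symm)
      exact this
    have := Finset.sum_lt_sum hMterm ⟨j, hj, hlt⟩
    rw [hM] at this
    exact lt_irrefl _ this
  have hcol1 : ∀ j ∈ SJ, ∑ i, x i j = 1 := by
    intro j hj
    refine le_antisymm (hub j) ?_
    rw [← hσ j hj]
    exact Finset.sum_le_sum_of_subset_of_nonneg (Finset.subset_univ _)
      (fun i _ _ => (hb01 i j).1)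
  refine ⟨?_, hcol1, ?_⟩
  · -- conclusion 1
    intro i hi
    by_contra hne
    have hlt : ∑ j, p j * x i j < B i := lt_of_le_of_ne (hbud i) hne
    have := Finset.sum_lt_sum (fun i (_ : i ∈ SIᶜ) => hbud i)
      ⟨i, Finset.mem_compl.2 hi, hlt⟩
    rw [hA] at this
    exact lt_irrefl _ this
  · -- conclusion 3
    intro j hj i hi
    have hsum0 : ∑ i ∈ SIᶜ, x i j = 0 := by
      have hh := Finset.sum_compl_add_sum SI (fun i => x i j)
      rw [hσ j hj, hcol1 j hj] at hh
      linarith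
    exact (Finset.sum_eq_zero_iff_of_nonneg
      (fun i _ => (hb01 i j).1)).1 hsum0 i (Finset.mem_compl.2 hi)
end

section
/- Suppose x is a stable allocation of a fixed pricing market with prices p, priorities >=, valuations v, and budgets B, and suppose x_{i,j} = 1 for some buyer i and item j. Let B' equal B except B'_i = B_i - p_{i,j}, and remove item j from the market (deleting all its prices, priorities, and valuations). Then the restriction of x to the remaining items is a stable allocation of the reduced market with budgets B'. -/
open Finset

/-- Stability in a fixed pricing market with personalized prices and
priorities (total preorders over buyers for each item). -/
def StableFP {I J : Type*} [Fintype I] [Fintype J]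
    (v p : I → J → ℝ) (B : I → ℝ) (pr : J → I → I → Prop)
    (x : I → J → ℝ) : Prop :=
  (∀ i j, 0 ≤ x i j ∧ x i j ≤ 1) ∧
  (∀ j, ∑ i, x i j ≤ 1) ∧
  (∀ i, ∑ j, x i j * p i j ≤ B i) ∧
  (∀ i j, 0 < x i j → 0 < v i j) ∧
  (∀ i j, x i j < 1 → 0 < v i j →
    ((∀ j', 0 < x i j' → v i j / p i j ≤ v i j' / p i j') ∧
        (∑ j', x i j' * p i j') = B i) ∨
      ((∑ i', x i' j) = 1 ∧ ∀ i', 0 < x i' j → pr j i' i))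

theorem stmt_10 {I J : Type*} [Fintype I] [Fintype J] [DecidableEq I] [DecidableEq J]
    (v p : I → J → ℝ) (B : I → ℝ) (pr : J → I → I → Prop)
    (hv : ∀ i j, 0 ≤ v i j) (hp : ∀ i j, 0 < p i j)
    (x : I → J → ℝ) (hx : StableFP v p B pr x)
    (i₀ : I) (j₀ : J) (hfull : x i₀ j₀ = 1)
    (B' : I → ℝ) (hB' : B' = fun i => if i = i₀ then B i₀ - p i₀ j₀ else B i) :
    StableFP (fun i (j : {j : J // j ≠ j₀}) => v i j.1)
      (fun i (j : {j : J // j ≠ j₀}) => p i j.1) B'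
      (fun (j : {j : J // j ≠ j₀}) => pr j.1)
      (fun i (j : {j : J // j ≠ j₀}) => x i j.1) := by
  obtain ⟨h01, hsupply, hbudget, hval, hstab⟩ := hx
  -- sum over the subtype equals the full sum minus the j₀ term
  have hsum : ∀ (f : J → ℝ),
      (∑ j : {j : J // j ≠ j₀}, f j.1) = (∑ j, f j) - f j₀ := by
    intro f
    have h1 : ∑ j ∈ Finset.univ.erase j₀, f j = ∑ j : {j : J // j ≠ j₀}, f j.1 :=
      Finset.sum_subtype _ (by simp) f
    have h2 : f j₀ + ∑ j ∈ Finset.univ.erase j₀, f j = ∑ j, f j :=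
      Finset.add_sum_erase _ f (mem_univ j₀)
    linarith
  -- x i j₀ = 0 for i ≠ i₀
  have hx0 : ∀ i, i ≠ i₀ → x i j₀ = 0 := by
    intro i hi
    have h1 : x i₀ j₀ + ∑ i' ∈ Finset.univ.erase i₀, x i' j₀ = ∑ i', x i' j₀ :=
      Finset.add_sum_erase _ (fun i' => x i' j₀) (mem_univ i₀)
    have h2 := hsupply j₀
    have h3 : ∑ i' ∈ Finset.univ.erase i₀, x i' j₀ ≤ 0 := by rw [hfull] at h1; linarith
    have h4 : ∀ i' ∈ Finset.univ.erase i₀, 0 ≤ x i' j₀ := fun i' _ => (h01 i' j₀).1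
    have h5 := Finset.sum_eq_zero_iff_of_nonneg h4
    have h6 : ∑ i' ∈ Finset.univ.erase i₀, x i' j₀ = 0 :=
      le_antisymm h3 (Finset.sum_nonneg h4)
    exact (h5.mp h6) i (by simp [hi])
  -- new budget feasibility
  have hbud' : ∀ i, (∑ j : {j : J // j ≠ j₀}, x i j.1 * p i j.1) ≤ B' i := by
    intro i
    rw [hsum (fun j => x i j * p i j), hB']
    by_cases hi : i = i₀
    · subst hi
      simp only [eq_self_iff_true, if_true, hfull, one_mul]
      have := hbudget i
      linarith
    · simp only [if_neg hi, hx0 i hi]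
      have := hbudget i
      have hpn := (hp i j₀).le
      nlinarith [hbudget i]
  refine ⟨fun i j => h01 i j.1, ?_, hbud', fun i j h => hval i j.1 h, ?_⟩
  · intro j
    have h1 : ∑ i ∈ Finset.univ, x i j.1 ≤ 1 := hsupply j.1
    have : (∑ i, x i j.1) = ∑ i, x i j.1 := rfl
    exact hsupply j.1
  · intro i j hlt hvpos
    rcases hstab i j.1 hlt hvpos with ⟨h1, h2⟩ | ⟨h1, h2⟩
    · left
      refine ⟨fun j' hj' => h1 j'.1 hj', ?_⟩
      rw [hsum (fun j' => x i j' * p i j'), hB']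
      by_cases hi : i = i₀
      · subst hi; simp only [eq_self_iff_true, if_true, hfull, one_mul]; linarith
      · simp only [if_neg hi, hx0 i hi]; rw [zero_mul] at *; linarith
    · right
      exact ⟨h1, fun i' hi' => h2 i' hi'⟩
end

section
/- Consider the two-seller market of Theorem 9 (buyer budgets both 2; buyer 1 values item 1 at 1 and item 2 at 2; buyer 2 values item 1 at 2 and item 2 at 1; seller k owns item k). If seller 2 sets prices p_{1,2} > 0 and p_{2,2} > 1, then by setting p_{1,1} = p_{1,2}/4 and p_{2,1} = 1 + p_{2,2} (with natural priorities), seller 1 guarantees revenue strictly greater than 2 in every stable allocation. -/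
open Finset

/-- Stability in a fixed pricing market with personalized prices and natural
priorities (for item `j`, buyer `i'` has strictly lower priority than `i` iff
`p i' j < p i j`). -/
def StablePP {n m : ℕ} (v p : Fin n → Fin m → ℝ) (B : Fin n → ℝ)
    (x : Fin n → Fin m → ℝ) : Prop :=
  (∀ i j, 0 ≤ x i j ∧ x i j ≤ 1) ∧
  (∀ j, ∑ i, x i j ≤ 1) ∧
  (∀ i, ∑ j, x i j * p i j ≤ B i) ∧
  (∀ i j, 0 < x i j → 0 < v i j) ∧
  ¬ ∃ i j, 0 < v i j ∧
      ((∑ i', x i' j) < 1 ∨ 0 < x i j ∨ ∃ i', 0 < x i' j ∧ p i' j < p i j) ∧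
      ((∑ j', x i j' * p i j') < B i ∨
        ∃ j', 0 < x i j' ∧ v i j' / p i j' < v i j / p i j)

theorem stmt_13
    (v p : Fin 2 → Fin 2 → ℝ) (B : Fin 2 → ℝ)
    (hv : v 0 0 = 1 ∧ v 0 1 = 2 ∧ v 1 0 = 2 ∧ v 1 1 = 1)
    (hB : ∀ i, B i = 2)
    -- seller 2's prices for item 2 (index 1)
    (h12 : 0 < p 0 1) (h22 : 1 < p 1 1)
    -- seller 1's response on item 1 (index 0)
    (h11 : p 0 0 = p 0 1 / 4) (h21 : p 1 0 = 1 + p 1 1) :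
    ∀ x : Fin 2 → Fin 2 → ℝ, StablePP v p B x →
      2 < p 0 0 * x 0 0 + p 1 0 * x 1 0 := by
  intro x hs
  obtain ⟨hv00, hv01, hv10, hv11⟩ := hv
  obtain ⟨hx, hcap, hbud, hpos, hnb⟩ := hs
  have hx00 := hx 0 0; have hx01 := hx 0 1
  have hx10 := hx 1 0; have hx11 := hx 1 1
  have hcap0 := hcap 0
  have hbud0 := hbud 0; have hbud1 := hbud 1
  simp only [Fin.sum_univ_two, hB] at hcap0 hbud0 hbud1
  have hp00 : 0 < p 0 0 := by rw [h11]; linarith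
  have hp10 : 2 < p 1 0 := by rw [h21]; linarith
  have hp11 : 0 < p 1 1 := by linarith
  by_contra hrev
  push_neg at hrev
  -- bang-per-buck comparisons
  have hr1 : v 1 1 / p 1 1 < v 1 0 / p 1 0 := by
    rw [hv11, hv10, h21, div_lt_div_iff₀ (by linarith) (by linarith)]
    linarith
  have hr0 : v 0 1 / p 0 1 < v 0 0 / p 0 0 := by
    rw [hv01, hv00, h11, div_lt_div_iff₀ h12 (by linarith)]
    linarith
  by_cases hA : x 1 0 = 0 ∧ x 0 0 + x 1 0 = 1
  · -- then x 0 0 = 1, buyer 1 blocks via priority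
    obtain ⟨h10z, hsum1⟩ := hA
    have hx00one : x 0 0 = 1 := by linarith
    have hpr : p 0 0 < p 1 0 := by nlinarith [hbud0, hx01.1, h12]
    refine hnb ⟨1, 0, by rw [hv10]; norm_num, ?_, ?_⟩
    · exact Or.inr (Or.inr ⟨0, by rw [hx00one]; norm_num, hpr⟩)
    · simp only [Fin.sum_univ_two, hB]
      rcases lt_or_ge (x 1 0 * p 1 0 + x 1 1 * p 1 1) 2 with h | h
      · exact Or.inl h
      · have hx11pos : 0 < x 1 1 := by
          rcases lt_or_eq_of_le hx11.1 with h' | h'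
          · exact h'
          · exfalso; rw [h10z] at h; nlinarith
        exact Or.inr ⟨1, hx11pos, hr1⟩
  · -- availability of item 0 for buyer 1 holds
    have havail : (x 0 0 + x 1 0 < 1) ∨ 0 < x 1 0 := by
      rcases lt_or_eq_of_le hx10.1 with h | h
      · exact Or.inr h
      · rcases lt_or_eq_of_le hcap0 with h' | h'
        · exact Or.inl h'
        · exact absurd ⟨h.symm, h'⟩ hA
    have havail' : (∑ i', x i' (0 : Fin 2)) < 1 ∨ 0 < x 1 0 ∨
        ∃ i', 0 < x i' (0 : Fin 2) ∧ p i' 0 < p 1 0 := by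
      rcases havail with h | h
      · exact Or.inl (by simpa [Fin.sum_univ_two] using h)
      · exact Or.inr (Or.inl h)
    have hx11z : x 1 1 = 0 := by
      rcases lt_or_eq_of_le hx11.1 with h | h
      · exact absurd ⟨1, 0, by rw [hv10]; norm_num, havail',
          Or.inr ⟨1, h, hr1⟩⟩ hnb
      · exact h.symm
    have hspend1 : x 1 0 * p 1 0 = 2 := by
      rcases lt_or_eq_of_le hbud1 with h | h
      · exact absurd ⟨1, 0, by rw [hv10]; norm_num, havail',
          Or.inl (by simp only [Fin.sum_univ_two, hB]; linarith)⟩ hnb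
      · rw [hx11z] at h; linarith
    have hx00z : x 0 0 = 0 := by
      have h1 : p 0 0 * x 0 0 ≤ 0 := by rw [mul_comm] at hspend1; linarith
      nlinarith [hx00.1, hp00]
    have hx10lt : x 1 0 < 1 := by nlinarith [hspend1, hp10, hx10.1]
    have havail0 : (∑ i', x i' (0 : Fin 2)) < 1 := by
      simp [Fin.sum_univ_two]; rw [hx00z]; linarith
    refine hnb ⟨0, 0, by rw [hv00]; norm_num, Or.inl havail0, ?_⟩
    simp only [Fin.sum_univ_two, hB]
    rcases lt_or_ge (x 0 0 * p 0 0 + x 0 1 * p 0 1) 2 with h | h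
    · exact Or.inl h
    · have hx01pos : 0 < x 0 1 := by
        rcases lt_or_eq_of_le hx01.1 with h' | h'
        · exact h'
        · exfalso; rw [hx00z, ← h'] at h; norm_num at h
      exact Or.inr ⟨1, hx01pos, hr0⟩
end
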